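/- Suppose each per-step success probability obeys scaling-law growth P_i(N) = exp(−c_i N^{−α_i}) with c_i, α_i > 0, not all α_i equal. Then F(log N) = log(−log Π_i P_i(N)) is a strictly convex function of log N; i.e., the multi-step success rate follows sub-scaling-law growth. -/

import Mathlib

/-!
Since `-log ∏ᵢ exp (-cᵢ e^{-αᵢ x}) = ∑ᵢ cᵢ e^{-αᵢ x}`, the function is `log g` for a positive
combination `g` of exponentials. Its second derivative is `(g'' g - g'²) / g²`, and writing
`wᵢ = cᵢ e^{-αᵢ x}` the numerator is `(∑ wᵢ αᵢ²)(∑ wᵢ) - (∑ wᵢ αᵢ)²`, which is `1/2 ∑ᵢⱼ wᵢ wⱼ (αᵢ - αⱼ)²`,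
hence positive as soon as two rates differ.
-/

open Real Finset

section CauchySchwarz

variable {ι R : Type*} (s : Finset ι)

lemma sum_sum_mul_mul_sub_sq [CommRing R] (w b : ι → R) :
    ∑ i ∈ s, ∑ j ∈ s, w i * w j * (b i - b j) ^ 2
      = 2 * ((∑ i ∈ s, w i * b i ^ 2) * ∑ i ∈ s, w i - (∑ i ∈ s, w i * b i) ^ 2) := by
  have expand : ∀ i j, w i * w j * (b i - b j) ^ 2
      = w i * b i ^ 2 * w j + w i * (w j * b j ^ 2) - 2 * (w i * b i * (w j * b j)) :=
    fun i j => by ring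
  simp only [expand, sum_add_distrib, sum_sub_distrib, ← mul_sum, ← sum_mul]
  ring

lemma sq_sum_mul_lt_sum_mul_sq_mul_sum [CommRing R] [LinearOrder R] [IsStrictOrderedRing R]
    {w b : ι → R} (hw : ∀ i ∈ s, 0 < w i) (hb : ∃ i ∈ s, ∃ j ∈ s, b i ≠ b j) :
    (∑ i ∈ s, w i * b i) ^ 2 < (∑ i ∈ s, w i * b i ^ 2) * ∑ i ∈ s, w i := by
  obtain ⟨i, hi, j, hj, hij⟩ := hb
  have hterm : ∀ k ∈ s, ∀ l ∈ s, 0 ≤ w k * w l * (b k - b l) ^ 2 := fun k hk l hl =>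
    mul_nonneg (mul_nonneg (hw k hk).le (hw l hl).le) (sq_nonneg _)
  have hij_pos : 0 < w i * w j * (b i - b j) ^ 2 :=
    mul_pos (mul_pos (hw i hi) (hw j hj)) (sq_pos_of_ne_zero (sub_ne_zero.2 hij))
  have hpos : 0 < ∑ k ∈ s, ∑ l ∈ s, w k * w l * (b k - b l) ^ 2 :=
    sum_pos' (fun k hk => sum_nonneg (hterm k hk))
      ⟨i, hi, sum_pos' (hterm i hi) ⟨j, hj, hij_pos⟩⟩
  rw [sum_sum_mul_mul_sub_sq] at hpos
  linarith

end CauchySchwarz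

section ExpMoment

variable {ι : Type*} [Fintype ι] (c β : ι → ℝ)

/-- The `k`-th derivative of `x ↦ ∑ i, c i * exp (β i * x)`. -/
noncomputable def expMoment (k : ℕ) (x : ℝ) : ℝ :=
  ∑ i, c i * β i ^ k * exp (β i * x)

lemma hasDerivAt_expMoment (k : ℕ) (x : ℝ) :
    HasDerivAt (expMoment c β k) (expMoment c β (k + 1) x) x := by
  refine (HasDerivAt.fun_sum fun i _ =>
    (((hasDerivAt_id' x).const_mul (β i)).exp).const_mul (c i * β i ^ k)).congr_deriv ?_
  exact sum_congr rfl fun i _ => by ring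

variable {c β}

lemma expMoment_zero_pos [Nonempty ι] (hc : ∀ i, 0 < c i) (x : ℝ) : 0 < expMoment c β 0 x :=
  sum_pos (fun i _ => by have := hc i; positivity) univ_nonempty

lemma expMoment_one_sq_lt (hc : ∀ i, 0 < c i) (hβ : ∃ i j, β i ≠ β j) (x : ℝ) :
    expMoment c β 1 x ^ 2 < expMoment c β 2 x * expMoment c β 0 x := by
  obtain ⟨i, j, hij⟩ := hβ
  have := sq_sum_mul_lt_sum_mul_sq_mul_sum univ (w := fun i => c i * exp (β i * x)) (b := β)
    (fun i _ => mul_pos (hc i) (exp_pos _)) ⟨i, mem_univ _, j, mem_univ _, hij⟩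
  simpa only [expMoment, pow_zero, pow_one, mul_one, mul_right_comm] using this

theorem strictConvexOn_log_sum_mul_exp (hc : ∀ i, 0 < c i) (hβ : ∃ i j, β i ≠ β j) :
    StrictConvexOn ℝ Set.univ fun x => log (∑ i, c i * exp (β i * x)) := by
  have : Nonempty ι := ⟨hβ.choose⟩
  have hg := expMoment_zero_pos (β := β) hc
  have hf : ∀ x, HasDerivAt (fun y => log (expMoment c β 0 y))
      (expMoment c β 1 x / expMoment c β 0 x) x :=
    fun x => (hasDerivAt_expMoment c β 0 x).log (hg x).ne'
  have hf' : ∀ x, HasDerivAt (fun y => expMoment c β 1 y / expMoment c β 0 y)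
      ((expMoment c β 2 x * expMoment c β 0 x - expMoment c β 1 x * expMoment c β 1 x)
        / expMoment c β 0 x ^ 2) x :=
    fun x => (hasDerivAt_expMoment c β 1 x).div (hasDerivAt_expMoment c β 0 x) (hg x).ne'
  have hfun : (fun x => log (∑ i, c i * exp (β i * x))) = fun x => log (expMoment c β 0 x) := by
    simp only [expMoment, pow_zero, mul_one]
  rw [hfun]
  refine StrictMono.strictConvexOn_univ_of_deriv
    (continuous_iff_continuousAt.2 fun x => (hf x).continuousAt) ?_
  rw [show deriv _ = _ from funext fun x => (hf x).deriv]
  refine strictMono_of_hasDerivAt_pos hf' fun x => div_pos ?_ (pow_pos (hg x) 2)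
  nlinarith [expMoment_one_sq_lt hc hβ x]

end ExpMoment

theorem multi_step_strictly_convex_general (n : ℕ) (c α : Fin n → ℝ)
    (hc : ∀ i, 0 < c i) (hne : ∃ i j, α i ≠ α j) :
    StrictConvexOn ℝ Set.univ
      (fun x : ℝ =>
        Real.log (-Real.log (∏ i, Real.exp (-(c i) * Real.exp (-(α i) * x))))) := by
  have hlog : ∀ x : ℝ, -log (∏ i, exp (-(c i) * exp (-(α i) * x)))
      = ∑ i, c i * exp (-α i * x) := fun x => by
    simp only [← exp_sum, log_exp, neg_mul, sum_neg_distrib, neg_neg]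
  simp only [hlog]
  exact strictConvexOn_log_sum_mul_exp hc (β := -α) (by simpa using hne)

theorem multi_step_strictly_convex (n : ℕ) (hn : 0 < n) (c α : Fin n → ℝ)
    (hc : ∀ i, 0 < c i) (hα : ∀ i, 0 < α i) (hne : ∃ i j, α i ≠ α j) :
    StrictConvexOn ℝ Set.univ
      (fun x : ℝ =>
        Real.log (-Real.log (∏ i, Real.exp (-(c i) * Real.exp (-(α i) * x))))) :=
  multi_step_strictly_convex_general n c α hc hne
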